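/- arXiv:2509.01712 — 3 statements merged into one kernel-verified Lean document; each statement's English description precedes it below -/
import Mathlib

section
/- Let (𝓛,𝓡) = (L_α, R_α)_{α<ω₁} be an (ω₁,ω₁)-gap and suppose for every club S ⊆ ω₁ the pregap (L_{S(α+1)} \ L_{S(α)}, R_{S(α+1)} \ R_{S(α)})_{α<ω₁} can be separated. Then for all uncountable X, Y ⊆ ω₁, the pregap (L_{X(α+1)} \ L_{X(α)}, R_{Y(α+1)} \ R_{Y(α)})_{α<ω₁} can be separated. (Proof via a continuous chain of elementary submodels producing a club S such that each pair of consecutive elements of X, respectively Y, lies in an interval of consecutive elements of S.) -/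
noncomputable section

def omega1 : Ordinal := (Cardinal.aleph 1).ord

namespace Stmt3Aux

universe u v s t

theorem lift_omega1 : Ordinal.lift.{u, v} omega1 = omega1 := by
  rw [omega1, Cardinal.lift_ord, Cardinal.lift_aleph, Ordinal.lift_one, omega1]

theorem omega1_isLimit : Order.IsSuccLimit (omega1.{u}) :=
  Cardinal.isSuccLimit_ord (Cardinal.aleph0_le_aleph 1)

theorem omega1_pos : (0 : Ordinal.{u}) < omega1 := omega1_isLimit.pos

theorem add_one_lt_omega1 {x : Ordinal.{u}} (hx : x < omega1) : x + 1 < omega1 := by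
  rw [Ordinal.add_one_eq_succ]; exact omega1_isLimit.succ_lt hx

theorem self_lt_add_one (x : Ordinal.{u}) : x < x + 1 := by
  rw [Ordinal.add_one_eq_succ]; exact Order.lt_succ x

open Classical in
/-- Transfer an ordinal from universe `u` to universe `v` (meaningful below `ω₁`). -/
noncomputable def transfer : Ordinal.{u} → Ordinal.{v} := fun x =>
  if h : ∃ y : Ordinal.{v}, Ordinal.lift.{u, v} y = Ordinal.lift.{v, u} x then h.choose
  else 0

theorem transfer_lift {x : Ordinal.{u}} (hx : x < omega1) :
    Ordinal.lift.{u, v} (transfer.{u, v} x) = Ordinal.lift.{v, u} x := by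
  have hle : Ordinal.lift.{v, u} x ≤ Ordinal.lift.{u, v} omega1.{v} := by
    rw [lift_omega1.{u, v}]
    exact le_of_lt ((Ordinal.lift_lt.mpr hx).trans_eq lift_omega1.{v, u})
  have h : ∃ y : Ordinal.{v}, Ordinal.lift.{u, v} y = Ordinal.lift.{v, u} x :=
    Ordinal.mem_range_lift_of_le hle
  unfold transfer
  rw [dif_pos h]
  exact h.choose_spec

theorem transfer_lt_omega1 {x : Ordinal.{u}} (hx : x < omega1) :
    transfer.{u, v} x < omega1 := by
  rw [← Ordinal.lift_lt.{u, v}, transfer_lift hx, lift_omega1.{u, v}]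
  exact (Ordinal.lift_lt.mpr hx).trans_eq lift_omega1.{v, u}

theorem transfer_lt_transfer {x y : Ordinal.{u}} (hxy : x < y) (hy : y < omega1) :
    transfer.{u, v} x < transfer.{u, v} y := by
  have hx : x < omega1 := hxy.trans hy
  rw [← Ordinal.lift_lt.{u, v}, transfer_lift hx, transfer_lift hy, Ordinal.lift_lt]
  exact hxy

theorem transfer_le_transfer {x y : Ordinal.{u}} (hxy : x ≤ y) (hy : y < omega1) :
    transfer.{u, v} x ≤ transfer.{u, v} y := by
  have hx : x < omega1 := lt_of_le_of_lt hxy hy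
  rw [← Ordinal.lift_le.{u, v}, transfer_lift hx, transfer_lift hy, Ordinal.lift_le]
  exact hxy

theorem transfer_transfer {x : Ordinal.{u}} (hx : x < omega1) :
    transfer.{v, u} (transfer.{u, v} x) = x := by
  have h1 : transfer.{u, v} x < omega1 := transfer_lt_omega1 hx
  rw [← Ordinal.lift_inj.{v, u}, transfer_lift h1, transfer_lift hx]

theorem transfer_add_one {x : Ordinal.{u}} (hx : x < omega1) :
    transfer.{u, v} (x + 1) = transfer.{u, v} x + 1 := by
  rw [← Ordinal.lift_inj.{u, v}, transfer_lift (add_one_lt_omega1 hx), Ordinal.lift_add,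
    Ordinal.lift_add, transfer_lift hx, Ordinal.lift_one, Ordinal.lift_one]

theorem transfer_isLimit {x : Ordinal.{u}} (hx : x < omega1) (hl : Order.IsSuccLimit x) :
    Order.IsSuccLimit (transfer.{u, v} x) := by
  have h : Order.IsSuccLimit (Ordinal.lift.{u, v} (transfer.{u, v} x)) := by
    rw [transfer_lift hx]
    exact Ordinal.isSuccLimit_lift.mpr hl
  exact Ordinal.isSuccLimit_lift.mp h

end Stmt3Aux

open Stmt3Aux in
theorem stmt3aux (L R : Ordinal.{v} → Set ℕ)
    (htowerL : ∀ α β : Ordinal.{v}, α < β → β < omega1 → (L α \ L β).Finite)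
    (htowerR : ∀ α β : Ordinal.{v}, α < β → β < omega1 → (R α \ R β).Finite)
    (hclub : ∀ S : Ordinal.{t} → Ordinal.{v},
      (∀ α < omega1, S α < omega1) →
      StrictMonoOn S (Set.Iio omega1) →
      (∀ δ < omega1, Order.IsSuccLimit δ → S δ = sSup (S '' Set.Iio δ)) →
      ∃ C : Set ℕ, ∀ α < omega1,
        ((L (S (α + 1)) \ L (S α)) \ C).Finite ∧ ((R (S (α + 1)) \ R (S α)) ∩ C).Finite) :
    ∀ X Y : Ordinal.{s} → Ordinal.{v},
      (∀ α < omega1, X α < omega1) → StrictMonoOn X (Set.Iio omega1) →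
      (∀ α < omega1, Y α < omega1) → StrictMonoOn Y (Set.Iio omega1) →
      ∃ C : Set ℕ, ∀ α < omega1,
        ((L (X (α + 1)) \ L (X α)) \ C).Finite ∧ ((R (Y (α + 1)) \ R (Y α)) ∩ C).Finite := by
  classical
  intro X Y hX hXm hY hYm
  -- the dominating function on Ordinal.{v}
  set g : Ordinal.{v} → Ordinal.{v} :=
    fun δ => X (transfer.{v, s} δ) ⊔ Y (transfer.{v, s} δ) with hg_def
  set f : Ordinal.{v} → Ordinal.{v} := fun δ => (g δ ⊔ δ) + 1 with hf_def
  have hfself : ∀ δ, δ < f δ := fun δ =>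
    lt_of_le_of_lt le_sup_right (self_lt_add_one _)
  have hfsucc : ∀ δ, δ + 1 ≤ f δ := fun δ => add_le_add_left le_sup_right 1
  have hgself : ∀ δ, g δ < f δ := fun δ =>
    lt_of_le_of_lt le_sup_left (self_lt_add_one _)
  have hflt : ∀ δ < omega1, f δ < omega1 := by
    intro δ hδ
    have ht : transfer.{v, s} δ < omega1 := transfer_lt_omega1 hδ
    have h1 : g δ ⊔ δ < omega1 := by
      simp only [hg_def, sup_lt_iff]
      exact ⟨⟨hX _ ht, hY _ ht⟩, hδ⟩
    exact add_one_lt_omega1 h1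
  have hfmono : ∀ a b, a ≤ b → b < omega1 → f a ≤ f b := by
    intro a b hab hb
    rcases eq_or_lt_of_le hab with rfl | hab
    · rfl
    have ha : a < omega1 := hab.trans hb
    have hta : transfer.{v, s} a < omega1 := transfer_lt_omega1 ha
    have htb : transfer.{v, s} b < omega1 := transfer_lt_omega1 hb
    have htab : transfer.{v, s} a < transfer.{v, s} b := transfer_lt_transfer hab hb
    have h1 : X (transfer.{v, s} a) ≤ X (transfer.{v, s} b) := (hXm hta htb htab).le
    have h2 : Y (transfer.{v, s} a) ≤ Y (transfer.{v, s} b) := (hYm hta htb htab).le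
    exact add_le_add_left (sup_le_sup (sup_le_sup h1 h2) hab.le) 1
  -- iterates stay below omega1
  have hiter : ∀ a < omega1, ∀ n, f^[n] a < omega1 := by
    intro a ha n
    induction n with
    | zero => simpa
    | succ n ih => rw [Function.iterate_succ_apply']; exact hflt _ ih
  -- nfp of points below omega1 are closure points
  have hnfp_cl : ∀ a < omega1, ∀ δ < Ordinal.nfp f a, f δ < Ordinal.nfp f a := by
    intro a ha δ hδ
    obtain ⟨n, hn⟩ := Ordinal.lt_nfp_iff.mp hδ
    have h1 : f δ ≤ f^[n + 1] a := by
      rw [Function.iterate_succ_apply']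
      exact hfmono δ (f^[n] a) hn.le (hiter a ha n)
    have h2 : f^[n + 1] a < f^[n + 2] a := by
      rw [Function.iterate_succ_apply' f (n + 1)]
      exact hfself _
    exact (h1.trans_lt h2).trans_le (Ordinal.iterate_le_nfp f a (n + 2))
  have hDnorm : Order.IsNormal (Ordinal.deriv f) := Ordinal.isNormal_deriv f
  have hDlt : ∀ β < omega1, Ordinal.deriv f β < omega1 := by
    intro β hβ
    exact Cardinal.deriv_lt_ord Cardinal.isRegular_aleph_one
      Cardinal.aleph0_lt_aleph_one.ne' hflt hβ
  have hDmono : Monotone (Ordinal.deriv f) := hDnorm.strictMono.monotone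
  have hDpos : ∀ β, 0 < Ordinal.deriv f β := by
    intro β
    have h1 : (0 : Ordinal.{v}) < f 0 := hfself 0
    have h2 : f 0 ≤ Ordinal.nfp f 0 := by
      simpa using Ordinal.iterate_le_nfp f 0 1
    calc (0 : Ordinal.{v}) < Ordinal.nfp f 0 := h1.trans_le h2
      _ = Ordinal.deriv f 0 := (Ordinal.deriv_zero_right f).symm
      _ ≤ Ordinal.deriv f β := hDmono zero_le
  -- values of deriv f below omega1 are closure points of f
  have hDcl : ∀ β < omega1, ∀ δ < Ordinal.deriv f β, f δ < Ordinal.deriv f β := by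
    intro β
    induction β using Ordinal.limitRecOn with
    | zero =>
      intro _ δ hδ
      rw [Ordinal.deriv_zero_right] at hδ ⊢
      exact hnfp_cl 0 omega1_pos δ hδ
    | add_one o ih =>
      intro hso δ hδ
      have ho : o < omega1 := (self_lt_add_one o).trans hso
      have hDo : Order.succ (Ordinal.deriv f o) < omega1 := omega1_isLimit.succ_lt (hDlt o ho)
      rw [Ordinal.add_one_eq_succ, Ordinal.deriv_succ] at hδ ⊢
      exact hnfp_cl _ hDo δ hδ
    | limit o hol ih =>
      intro ho δ hδ
      haveI : Small.{v} {a : Ordinal.{v} // a < o} :=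
        inferInstanceAs (Small.{v} (Set.Iio o))
      rw [Ordinal.deriv_limit f hol] at hδ ⊢
      obtain ⟨⟨a, hao⟩, ha⟩ := Ordinal.lt_iSup_iff.mp hδ
      have h1 : f δ < Ordinal.deriv f a := ih a hao (hao.trans ho) δ ha
      exact h1.trans_le (Ordinal.le_iSup (fun a : {a // a < o} => Ordinal.deriv f a.1) ⟨a, hao⟩)
  -- the club enumeration
  set S : Ordinal.{t} → Ordinal.{v} :=
    fun β => if β = 0 then 0 else Ordinal.deriv f (transfer.{t, v} β) with hS_def
  have hS0 : S 0 = 0 := if_pos rfl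
  have hSne : ∀ β, β ≠ 0 → S β = Ordinal.deriv f (transfer.{t, v} β) := fun β h => if_neg h
  have hSlt : ∀ β < omega1, S β < omega1 := by
    intro β hβ
    rcases eq_or_ne β 0 with rfl | h
    · rw [hS0]; exact omega1_pos
    · rw [hSne β h]; exact hDlt _ (transfer_lt_omega1 hβ)
  have hSmono : StrictMonoOn S (Set.Iio omega1) := by
    intro a ha b hb hab
    have hb0 : b ≠ 0 := by
      rintro rfl
      exact zero_le.not_gt hab
    rcases eq_or_ne a 0 with rfl | h
    · rw [hS0, hSne b hb0]; exact hDpos _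
    · rw [hSne a h, hSne b hb0]
      exact hDnorm.strictMono (transfer_lt_transfer hab hb)
  have hScont : ∀ δ < omega1, Order.IsSuccLimit δ → S δ = sSup (S '' Set.Iio δ) := by
    intro δ hδω hδ
    have hdt : transfer.{t, v} δ < omega1 := transfer_lt_omega1 hδω
    have hdl : Order.IsSuccLimit (transfer.{t, v} δ) := transfer_isLimit hδω hδ
    haveI : Small.{v} {a : Ordinal.{v} // a < transfer.{t, v} δ} :=
      inferInstanceAs (Small.{v} (Set.Iio (transfer.{t, v} δ)))
    have hSleD : ∀ a < δ, S a ≤ Ordinal.deriv f (transfer.{t, v} δ) := by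
      intro a ha
      rcases eq_or_ne a 0 with rfl | h
      · rw [hS0]; exact (hDpos _).le
      · rw [hSne a h]
        exact hDmono (transfer_le_transfer ha.le hδω)
    have hbdd : BddAbove (S '' Set.Iio δ) := by
      refine ⟨Ordinal.deriv f (transfer.{t, v} δ), ?_⟩
      rintro x ⟨a, ha, rfl⟩
      exact hSleD a ha
    rw [hSne δ hδ.ne_zero]
    apply le_antisymm
    · rw [Ordinal.deriv_limit f hdl]
      apply Ordinal.iSup_le
      rintro ⟨a, ha⟩
      -- a : Ordinal.{v}, a < transfer δ
      have haω : a < omega1 := ha.trans hdt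
      have ha' : transfer.{v, t} a < δ := by
        have h2 : transfer.{v, t} a < transfer.{v, t} (transfer.{t, v} δ) :=
          transfer_lt_transfer ha hdt
        rwa [transfer_transfer hδω] at h2
      have ha'1 : transfer.{v, t} a + 1 < δ := by
        rw [Ordinal.add_one_eq_succ]; exact hδ.succ_lt ha'
      have hkey : a ≤ transfer.{t, v} (transfer.{v, t} a + 1) := by
        rw [transfer_add_one (ha'.trans hδω), transfer_transfer haω]
        exact (self_lt_add_one a).le
      have h10 : transfer.{v, t} a + 1 ≠ 0 := by
        intro hc
        exact absurd (hc ▸ self_lt_add_one (transfer.{v, t} a)) zero_le.not_gt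
      have h3 : Ordinal.deriv f a ≤ S (transfer.{v, t} a + 1) := by
        rw [hSne _ h10]
        exact hDmono hkey
      exact h3.trans (le_csSup hbdd ⟨transfer.{v, t} a + 1, ha'1, rfl⟩)
    · refine csSup_le ⟨S 0, ⟨0, hδ.pos, rfl⟩⟩ ?_
      rintro x ⟨a, ha, rfl⟩
      exact hSleD a ha
  -- strictly monotone maps dominate (the transfer of) the identity
  have hWle : ∀ W : Ordinal.{s} → Ordinal.{v}, (∀ a < omega1, W a < omega1) →
      StrictMonoOn W (Set.Iio omega1) → ∀ a < omega1, transfer.{s, v} a ≤ W a := by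
    intro W hW hWm a
    induction a using Ordinal.induction with
    | h a IH =>
      intro ha
      by_contra hcon
      push_neg at hcon
      have hWaω : W a < omega1 := hW a ha
      have hca : transfer.{v, s} (W a) < a := by
        have h2 : transfer.{v, s} (W a) < transfer.{v, s} (transfer.{s, v} a) :=
          transfer_lt_transfer hcon (transfer_lt_omega1 ha)
        rwa [transfer_transfer ha] at h2
      have hcω : transfer.{v, s} (W a) < omega1 := hca.trans ha
      have h1 : transfer.{s, v} (transfer.{v, s} (W a)) ≤ W (transfer.{v, s} (W a)) :=
        IH _ hca hcω
      rw [transfer_transfer hWaω] at h1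
      have h2 : W (transfer.{v, s} (W a)) < W a := hWm hcω ha hca
      exact absurd (h1.trans_lt h2) (lt_irrefl _)
  -- the key lemma
  have key : ∀ W : Ordinal.{s} → Ordinal.{v}, (∀ a < omega1, W a < omega1) →
      StrictMonoOn W (Set.Iio omega1) → (∀ a < omega1, W a ≤ g (transfer.{s, v} a)) →
      ∀ α < omega1, ∃ β : Ordinal.{t}, β + 1 < omega1 ∧ S β ≤ W α ∧ W (α + 1) < S (β + 1) := by
    intro W hW hWm hWg α hα
    have hα1 : α + 1 < omega1 := add_one_lt_omega1 hα
    have hWα : W α < omega1 := hW α hα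
    set T : Set Ordinal.{t} := {γ | γ < omega1 ∧ S γ ≤ W α} with hT_def
    have hT0 : (0 : Ordinal.{t}) ∈ T := ⟨omega1_pos, by rw [hS0]; exact zero_le⟩
    have hwtω : transfer.{v, t} (W α) < omega1 := transfer_lt_omega1 hWα
    have hTbd : ∀ γ ∈ T, γ ≤ transfer.{v, t} (W α) := by
      rintro γ ⟨hγω, hγ⟩
      rcases eq_or_ne γ 0 with rfl | h
      · exact zero_le
      · have h1 : transfer.{t, v} γ ≤ W α := by
          rw [hSne γ h] at hγ
          exact hDnorm.strictMono.le_apply.trans hγ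
        have h2 : transfer.{v, t} (transfer.{t, v} γ) ≤ transfer.{v, t} (W α) :=
          transfer_le_transfer h1 hWα
        rwa [transfer_transfer hγω] at h2
    have hbdd : BddAbove T := ⟨_, hTbd⟩
    have hne : T.Nonempty := ⟨0, hT0⟩
    set β := sSup T with hβ_def
    have hβle : β ≤ transfer.{v, t} (W α) := csSup_le hne hTbd
    have hβω : β < omega1 := hβle.trans_lt hwtω
    have hβ1 : β + 1 < omega1 := add_one_lt_omega1 hβω
    have hβmem : S β ≤ W α := by
      rcases Ordinal.zero_or_succ_or_isSuccLimit β with h0 | ⟨ξ, hξ⟩ | hlim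
      · rw [h0, hS0]; exact zero_le
      · have hξβ : ξ < β := by rw [← hξ]; exact Order.lt_succ ξ
        obtain ⟨γ, hγT, hξγ⟩ := exists_lt_of_lt_csSup hne hξβ
        have hγβ : γ ≤ β := le_csSup hbdd hγT
        have hβγ : β ≤ γ := by rw [← hξ]; exact Order.succ_le_iff.mpr hξγ
        have hγeq : γ = β := le_antisymm hγβ hβγ
        exact (hγeq ▸ hγT).2
      · have hlv : Order.IsSuccLimit (transfer.{t, v} β) := transfer_isLimit hβω hlim
        haveI : Small.{v} {a : Ordinal.{v} // a < transfer.{t, v} β} :=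
          inferInstanceAs (Small.{v} (Set.Iio (transfer.{t, v} β)))
        rw [hSne β hlim.ne_zero, Ordinal.deriv_limit f hlv]
        apply Ordinal.iSup_le
        rintro ⟨a, ha⟩
        have haω : a < omega1 := ha.trans (transfer_lt_omega1 hβω)
        have ha' : transfer.{v, t} a < β := by
          have h2 : transfer.{v, t} a < transfer.{v, t} (transfer.{t, v} β) :=
            transfer_lt_transfer ha (transfer_lt_omega1 hβω)
          rwa [transfer_transfer hβω] at h2
        obtain ⟨γ, hγT, hγlt⟩ := exists_lt_of_lt_csSup hne ha'
        have hγ0 : γ ≠ 0 := by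
          intro hc
          rw [hc] at hγlt
          exact absurd hγlt zero_le.not_gt
        have haγ : a ≤ transfer.{t, v} γ := by
          have h3 : transfer.{t, v} (transfer.{v, t} a) ≤ transfer.{t, v} γ :=
            transfer_le_transfer hγlt.le hγT.1
          rwa [transfer_transfer haω] at h3
        calc Ordinal.deriv f a ≤ Ordinal.deriv f (transfer.{t, v} γ) := hDmono haγ
          _ = S γ := (hSne γ hγ0).symm
          _ ≤ W α := hγT.2
    have hnot : W α < S (β + 1) := by
      by_contra h
      push_neg at h
      have hmem : β + 1 ∈ T := ⟨hβ1, h⟩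
      have hle2 : β + 1 ≤ β := le_csSup hbdd hmem
      exact absurd hle2 (self_lt_add_one β).not_ge
    refine ⟨β, hβ1, hβmem, ?_⟩
    have hβ10 : β + 1 ≠ 0 := by
      intro hc
      exact absurd (hc ▸ self_lt_add_one β) zero_le.not_gt
    have hSD : S (β + 1) = Ordinal.deriv f (transfer.{t, v} β + 1) := by
      rw [hSne (β + 1) hβ10, transfer_add_one hβω]
    rw [hSD] at hnot ⊢
    have hb1ω : transfer.{t, v} β + 1 < omega1 :=
      add_one_lt_omega1 (transfer_lt_omega1 hβω)
    have h1 : transfer.{s, v} α < Ordinal.deriv f (transfer.{t, v} β + 1) :=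
      (hWle W hW hWm α hα).trans_lt hnot
    have h2 : f (transfer.{s, v} α) < Ordinal.deriv f (transfer.{t, v} β + 1) :=
      hDcl _ hb1ω _ h1
    have h3 : transfer.{s, v} α + 1 < Ordinal.deriv f (transfer.{t, v} β + 1) :=
      (hfsucc _).trans_lt h2
    have h4 : transfer.{s, v} (α + 1) < Ordinal.deriv f (transfer.{t, v} β + 1) := by
      rwa [transfer_add_one hα]
    have h5 : f (transfer.{s, v} (α + 1)) < Ordinal.deriv f (transfer.{t, v} β + 1) :=
      hDcl _ hb1ω _ h4
    exact lt_of_le_of_lt ((hWg (α + 1) hα1).trans (hgself _).le) h5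
  -- conclude
  obtain ⟨C, hC⟩ := hclub S hSlt hSmono hScont
  refine ⟨C, fun α hα => ?_⟩
  have hα1 : α + 1 < omega1 := add_one_lt_omega1 hα
  have hdiffL : ∀ a b : Ordinal.{v}, a ≤ b → b < omega1 → (L a \ L b).Finite := by
    intro a b hab hb
    rcases eq_or_lt_of_le hab with rfl | h
    · simp
    · exact htowerL a b h hb
  have hdiffR : ∀ a b : Ordinal.{v}, a ≤ b → b < omega1 → (R a \ R b).Finite := by
    intro a b hab hb
    rcases eq_or_lt_of_le hab with rfl | h
    · simp
    · exact htowerR a b h hb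
  have hXg : ∀ a < omega1, X a ≤ g (transfer.{s, v} a) := by
    intro a ha
    rw [hg_def]
    simp only
    rw [transfer_transfer ha]
    exact le_sup_left
  have hYg : ∀ a < omega1, Y a ≤ g (transfer.{s, v} a) := by
    intro a ha
    rw [hg_def]
    simp only
    rw [transfer_transfer ha]
    exact le_sup_right
  obtain ⟨βX, hβX1, hβXle, hβXlt⟩ := key X hX hXm hXg α hα
  obtain ⟨βY, hβY1, hβYle, hβYlt⟩ := key Y hY hYm hYg α hα
  have hβX : βX < omega1 := (self_lt_add_one βX).trans hβX1
  have hβY : βY < omega1 := (self_lt_add_one βY).trans hβY1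
  constructor
  · have hfin1 : ((L (S (βX + 1)) \ L (S βX)) \ C).Finite := (hC βX hβX).1
    have hfin2 : (L (X (α + 1)) \ L (S (βX + 1))).Finite :=
      hdiffL _ _ hβXlt.le (hSlt _ hβX1)
    have hfin3 : (L (S βX) \ L (X α)).Finite := hdiffL _ _ hβXle (hX α hα)
    refine ((hfin1.union hfin2).union hfin3).subset ?_
    intro n hn
    simp only [Set.mem_union, Set.mem_diff] at hn ⊢
    tauto
  · have hfin1 : ((R (S (βY + 1)) \ R (S βY)) ∩ C).Finite := (hC βY hβY).2
    have hfin2 : (R (Y (α + 1)) \ R (S (βY + 1))).Finite :=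
      hdiffR _ _ hβYlt.le (hSlt _ hβY1)
    have hfin3 : (R (S βY) \ R (Y α)).Finite := hdiffR _ _ hβYle (hY α hα)
    refine ((hfin1.union hfin2).union hfin3).subset ?_
    intro n hn
    simp only [Set.mem_union, Set.mem_diff, Set.mem_inter_iff] at hn ⊢
    tauto

/-- If `(L_α,R_α)_{α<ω₁}` is an `(ω₁,ω₁)`-gap such that for every club of `ω₁`
(represented by its increasing enumeration, a normal function `S`) the pregap
`(L_{S(α+1)} \ L_{S(α)}, R_{S(α+1)} \ R_{S(α)})_{α<ω₁}` can be separated, then for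
all uncountable `X, Y ⊆ ω₁` (represented by their increasing enumerations) the pregap
`(L_{X(α+1)} \ L_{X(α)}, R_{Y(α+1)} \ R_{Y(α)})_{α<ω₁}` can be separated. -/
theorem stmt3 (L R : Ordinal → Set ℕ)
    (hLinf : ∀ α < omega1, (L α).Infinite)
    (hRinf : ∀ α < omega1, (R α).Infinite)
    (htowerL : ∀ α β : Ordinal, α < β → β < omega1 → (L α \ L β).Finite)
    (htowerR : ∀ α β : Ordinal, α < β → β < omega1 → (R α \ R β).Finite)
    (hpregap : ∀ α < omega1, ∀ β < omega1, (L α ∩ R β).Finite)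
    (hgap : ¬ ∃ C : Set ℕ, ∀ α < omega1, (L α \ C).Finite ∧ (R α ∩ C).Finite)
    (hclub : ∀ S : Ordinal → Ordinal,
      (∀ α < omega1, S α < omega1) →
      StrictMonoOn S (Set.Iio omega1) →
      (∀ δ < omega1, Order.IsSuccLimit δ → S δ = sSup (S '' Set.Iio δ)) →
      ∃ C : Set ℕ, ∀ α < omega1,
        ((L (S (α + 1)) \ L (S α)) \ C).Finite ∧ ((R (S (α + 1)) \ R (S α)) ∩ C).Finite) :
    ∀ X Y : Ordinal → Ordinal,
      (∀ α < omega1, X α < omega1) → StrictMonoOn X (Set.Iio omega1) →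
      (∀ α < omega1, Y α < omega1) → StrictMonoOn Y (Set.Iio omega1) →
      ∃ C : Set ℕ, ∀ α < omega1,
        ((L (X (α + 1)) \ L (X α)) \ C).Finite ∧ ((R (Y (α + 1)) \ R (Y α)) ∩ C).Finite := by
  exact stmt3aux L R htowerL htowerR hclub
end
end

section
/- Let 𝓗 be the ideal on ω₁ generated by {H_n(α) : n ∈ ω, α < ω₁} and for β < ω₁ let 𝓗|_β be the ideal generated by {H_n(α) : α ≤ β, n ∈ ω}. Assume H_m(α) ⊆ H_n(α) for m < n, and H_n(γ) ∩ β ⊆ H_n(β) whenever β < γ and n > ρ(β,γ). Then for A ⊆ β: (a) if A ∈ (𝓗|_β)^⊥ then A ∈ 𝓗^⊥; (b) if A ∈ (𝓗|_β)⁺ then A ∈ 𝓗⁺. -/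
noncomputable section

/-- The orthogonal of a family `𝓙`. -/
def orth (𝓙 : Set (Set Ordinal)) : Set (Set Ordinal) :=
  {A | ∀ B ∈ 𝓙, (A ∩ B).Finite}

/-- The ideal generated by a family `G` of subsets of `ω₁` (together with the finite
sets): subsets of a finite set united with a finite union of members of `G`. -/
def genIdeal (G : Set (Set Ordinal)) : Set (Set Ordinal) :=
  {A | ∃ (t : Finset (Set Ordinal)) (f : Set Ordinal),
    (t : Set (Set Ordinal)) ⊆ G ∧ f.Finite ∧ A ⊆ f ∪ ⋃ B ∈ t, B}

/-- Let `𝓗` be the ideal generated by `{H_n(α) : n ∈ ω, α < ω₁}` and `𝓗|_β` the ideal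
generated by `{H_n(α) : α ≤ β, n ∈ ω}`. Assuming the monotonicity properties of the
`H_n(α)`, for `A ⊆ β`: (a) `A ∈ (𝓗|_β)^⊥` implies `A ∈ 𝓗^⊥`; (b) `A ∈ (𝓗|_β)⁺`
implies `A ∈ 𝓗⁺`. -/
theorem stmt14 (H : ℕ → Ordinal → Set Ordinal) (ρ : Ordinal → Ordinal → ℕ)
    (hρsym : ∀ α β : Ordinal, ρ α β = ρ β α)
    (hsub : ∀ (n : ℕ) (α : Ordinal), H n α ⊆ Set.Iio α)
    (hmono : ∀ (m n : ℕ) (α : Ordinal), m < n → H m α ⊆ H n α)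
    (hrestr : ∀ (β γ : Ordinal) (n : ℕ), β < γ → ρ β γ < n →
      H n γ ∩ Set.Iio β ⊆ H n β)
    (β : Ordinal) (hβ : β < omega1) (A : Set Ordinal) (hA : A ⊆ Set.Iio β) :
    ((A ∈ orth (genIdeal {B | ∃ n : ℕ, ∃ α ≤ β, B = H n α})) →
      A ∈ orth (genIdeal {B | ∃ n : ℕ, ∃ α < omega1, B = H n α})) ∧
    ((A ∉ genIdeal {B | ∃ n : ℕ, ∃ α ≤ β, B = H n α}) →
      A ∉ genIdeal {B | ∃ n : ℕ, ∃ α < omega1, B = H n α}) := by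
  classical
  -- Key lemma: for any member of the full family, its intersection with `Iio β`
  -- is contained in a member of the restricted family.
  have key : ∀ (n : ℕ) (α : Ordinal), ∃ B', (∃ m : ℕ, ∃ γ ≤ β, B' = H m γ) ∧
      H n α ∩ Set.Iio β ⊆ B' := by
    intro n α
    rcases le_or_gt α β with h | h
    · exact ⟨H n α, ⟨n, α, h, rfl⟩, Set.inter_subset_left⟩
    · set m := max n (ρ β α + 1) with hm
      have hnm : n ≤ m := le_max_left _ _
      have hρm : ρ β α < m := lt_of_lt_of_le (Nat.lt_succ_self _) (le_max_right _ _)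
      have hHn : H n α ⊆ H m α := by
        rcases lt_or_eq_of_le hnm with h' | h'
        · exact hmono n m α h'
        · rw [h']
      refine ⟨H m β, ⟨m, β, le_rfl, rfl⟩, ?_⟩
      intro x hx
      exact hrestr β α m h hρm ⟨hHn hx.1, hx.2⟩
  -- members of the restricted family are in the restricted ideal
  have mem_gen : ∀ B' ∈ {B | ∃ n : ℕ, ∃ α ≤ β, B = H n α},
      B' ∈ genIdeal {B | ∃ n : ℕ, ∃ α ≤ β, B = H n α} := by
    intro B' hB'
    refine ⟨{B'}, ∅, ?_, Set.finite_empty, ?_⟩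
    · simpa using hB'
    · intro x hx; simp [hx]
  constructor
  · -- part (a)
    intro horth B hB
    rcases hB with ⟨t, f, ht, hf, hBsub⟩
    have hsub2 : A ∩ B ⊆ (A ∩ f) ∪ ⋃ C ∈ t, A ∩ C := by
      intro x hx
      rcases hBsub hx.2 with hxf | hxu
      · exact Or.inl ⟨hx.1, hxf⟩
      · rcases Set.mem_iUnion₂.1 hxu with ⟨C, hC, hxC⟩
        exact Or.inr (Set.mem_iUnion₂.2 ⟨C, hC, hx.1, hxC⟩)
    refine Set.Finite.subset (Set.Finite.union (hf.inter_of_right _) ?_) hsub2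
    refine Set.Finite.biUnion t.finite_toSet ?_
    intro C hC
    rcases ht hC with ⟨n, α, hα, rfl⟩
    rcases key n α with ⟨B', hB', hBsub'⟩
    have : A ∩ H n α ⊆ A ∩ B' := by
      intro x hx
      exact ⟨hx.1, hBsub' ⟨hx.2, hA hx.1⟩⟩
    exact Set.Finite.subset (horth B' (mem_gen B' hB')) this
  · -- part (b)
    intro hnot hc
    apply hnot
    rcases hc with ⟨t, f, ht, hf, hsubA⟩
    set g : Set Ordinal → Set Ordinal := fun C =>
      if h : ∃ B', (∃ m : ℕ, ∃ γ ≤ β, B' = H m γ) ∧ C ∩ Set.Iio β ⊆ B'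
      then h.choose else ∅ with hg
    have hgprop : ∀ C ∈ t, (∃ m : ℕ, ∃ γ ≤ β, g C = H m γ) ∧ C ∩ Set.Iio β ⊆ g C := by
      intro C hC
      rcases ht hC with ⟨n, α, hα, rfl⟩
      have hex : ∃ B', (∃ m : ℕ, ∃ γ ≤ β, B' = H m γ) ∧ H n α ∩ Set.Iio β ⊆ B' :=
        key n α
      simp only [hg, dif_pos hex]
      exact hex.choose_spec
    refine ⟨t.image g, f, ?_, hf, ?_⟩
    · intro C hC
      simp only [Finset.coe_image, Set.mem_image, Finset.mem_coe] at hC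
      rcases hC with ⟨D, hD, rfl⟩
      exact (hgprop D hD).1
    · intro x hx
      rcases hsubA hx with hxf | hxu
      · exact Or.inl hxf
      · rcases Set.mem_iUnion₂.1 hxu with ⟨C, hC, hxC⟩
        refine Or.inr (Set.mem_iUnion₂.2 ⟨g C, ?_, ?_⟩)
        · exact Finset.mem_image_of_mem g hC
        · exact (hgprop C hC).2 ⟨hxC, hA hx⟩
end
end

section
/- Let 𝓘 be the ideal of all countable A ⊆ ω₁ with A ∩ H_n(α) finite for every n ∈ ω and α < ω₁. Suppose: for each β < ω₁ the restriction ideal 𝓗|_β is countably generated (generated by {H_n(β_i)} for an enumeration ⟨β_i⟩ of β+1 using monotonicity H_m(α) ⊆ H_n(α) for m ≤ n), and that membership in (𝓗|_β)^⊥ for subsets of β implies membership in 𝓘. Then 𝓘 is a P-ideal: every increasing sequence ⟨A_n⟩ of members of 𝓘 has a pseudo-union A ∈ 𝓘 with A_n ⊆* A for all n. -/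
noncomputable section

/-- `𝓘 = 𝓗^⊥ ∩ [ω₁]^{≤ω}`: countable subsets of `ω₁` orthogonal to every `H_n(α)`. -/
def Iideal (H : ℕ → Ordinal → Set Ordinal) : Set (Set Ordinal) :=
  {A | A ⊆ Set.Iio omega1 ∧ A.Countable ∧
    ∀ (n : ℕ) (α : Ordinal), α < omega1 → (A ∩ H n α).Finite}

/-- Under the monotonicity properties of the `H_n(α)`, the countable generation of the
restriction ideals `𝓗|_β` (for `β < ω₁`, witnessed by countability of `Iic β`) and the
fact that orthogonality to `𝓗|_β` for subsets of `β` implies membership in `𝓘`, the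
ideal `𝓘` is a P-ideal: every increasing sequence in `𝓘` admits a pseudo-union
in `𝓘`. -/
theorem stmt15 (H : ℕ → Ordinal → Set Ordinal) (ρ : Ordinal → Ordinal → ℕ)
    (hsub : ∀ (n : ℕ) (α : Ordinal), H n α ⊆ Set.Iio α)
    (hmono : ∀ (m n : ℕ) (α : Ordinal), m ≤ n → H m α ⊆ H n α)
    (hrestr : ∀ (β γ : Ordinal) (n : ℕ), β < γ → ρ β γ < n →
      H n γ ∩ Set.Iio β ⊆ H n β)
    (hcount : ∀ β < omega1, (Set.Iic β).Countable)
    (horth : ∀ β < omega1, ∀ A ⊆ Set.Iio β, A.Countable →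
      (∀ n : ℕ, ∀ α ≤ β, (A ∩ H n α).Finite) → A ∈ Iideal H) :
    ∀ A : ℕ → Set Ordinal, (∀ k, A k ∈ Iideal H) → (∀ k, A k ⊆ A (k + 1)) →
      ∃ B ∈ Iideal H, ∀ k, (A k \ B).Finite := by
  intro A hA hAmono
  -- the union of the `A k` is countable
  have hUcnt : (⋃ k, A k).Countable := Set.countable_iUnion fun k => (hA k).2.1
  have hUsub : (⋃ k, A k) ⊆ Set.Iio omega1 := Set.iUnion_subset fun k => (hA k).1
  -- find a bound `β < ω₁` for the union
  obtain ⟨β, hUβ, hβ⟩ : ∃ β, (⋃ k, A k) ⊆ Set.Iio β ∧ β < omega1 := by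
    rcases Set.eq_empty_or_nonempty (⋃ k, A k) with h | h
    · exact ⟨0, by simp [h],
        (Cardinal.isSuccLimit_ord (le_of_lt Cardinal.aleph0_lt_aleph_one)).pos⟩
    · obtain ⟨g, hg⟩ := hUcnt.exists_eq_range h
      have hglt : ∀ m, g m < omega1 := fun m =>
        hUsub (by rw [hg]; exact ⟨m, rfl⟩)
      have hsup : iSup g < omega1 := by
        have := Ordinal.iSup_lt_omega_one (f := g) (by simpa [omega1, Cardinal.ord_aleph] using hglt)
        simpa [omega1, Cardinal.ord_aleph] using this
      refine ⟨iSup g + 1, ?_, ?_⟩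
      · intro x hx
        rw [hg] at hx
        obtain ⟨m, rfl⟩ := hx
        exact lt_of_le_of_lt (Ordinal.le_iSup g m) (lt_add_one _)
      · exact (Cardinal.isSuccLimit_ord (le_of_lt Cardinal.aleph0_lt_aleph_one)).succ_lt hsup
  -- enumerate `Iic β` (countable since `β < ω₁`)
  have hIic : (Set.Iic β).Countable := by
    have h1 : β + 1 < omega1 :=
      (Cardinal.isSuccLimit_ord (le_of_lt Cardinal.aleph0_lt_aleph_one)).succ_lt hβ
    have h2 : Cardinal.mk (Set.Iio (β + 1)) ≤ Cardinal.aleph0 := by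
      rw [Ordinal.mk_Iio_ordinal]
      have : (β + 1).card < Cardinal.aleph 1 := Cardinal.lt_ord.1 h1
      have hle : (β + 1).card ≤ Cardinal.aleph0 :=
        Order.lt_succ_iff.1 (by rwa [Cardinal.succ_aleph0])
      calc Cardinal.lift (β + 1).card ≤ Cardinal.lift Cardinal.aleph0 :=
            Cardinal.lift_le.2 hle
        _ = Cardinal.aleph0 := Cardinal.lift_aleph0
    have h3 : Cardinal.mk (Set.Iic β) ≤ Cardinal.aleph0 := by
      rw [show Set.Iic β = Set.Iio (β + 1) by
        ext x
        simp [Set.mem_Iic, Set.mem_Iio, Order.lt_add_one_iff]]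
      exact h2
    exact Set.countable_coe_iff.1 (Cardinal.mk_le_aleph0_iff.1 h3)
  obtain ⟨f, hf⟩ := hIic.exists_eq_range ⟨β, Set.self_mem_Iic⟩
  have hfle : ∀ i, f i ≤ β := fun i => by
    have : f i ∈ Set.Iic β := by rw [hf]; exact ⟨i, rfl⟩
    exact this
  have hflt : ∀ i, f i < omega1 := fun i => lt_of_le_of_lt (hfle i) hβ
  -- the pseudo-union
  set B : Set Ordinal := ⋃ k, (A k \ ⋃ i ∈ Finset.range (k + 1), H k (f i)) with hB
  have hBsub : B ⊆ Set.Iio β := by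
    intro x hx
    obtain ⟨k, hk, -⟩ := Set.mem_iUnion.1 hx
    exact hUβ (Set.mem_iUnion.2 ⟨k, hk⟩)
  have hBcnt : B.Countable :=
    Set.countable_iUnion fun k => ((hA k).2.1).mono Set.diff_subset
  have key : ∀ n : ℕ, ∀ α ≤ β, (B ∩ H n α).Finite := by
    intro n α hα
    have : α ∈ Set.range f := by rw [← hf]; exact hα
    obtain ⟨i, rfl⟩ := this
    have hsub2 : B ∩ H n (f i) ⊆ ⋃ k ∈ Finset.range (max n i), (A k ∩ H n (f i)) := by
      rintro x ⟨hxB, hxH⟩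
      obtain ⟨k, hk⟩ := Set.mem_iUnion.1 hxB
      have hklt : k < max n i := by
        by_contra h
        push_neg at h
        have hn : n ≤ k := le_trans (le_max_left n i) h
        have hi : i ≤ k := le_trans (le_max_right n i) h
        exact hk.2 (Set.mem_biUnion (Finset.mem_range.2 (Nat.lt_succ_of_le hi))
          (hmono n k (f i) hn hxH))
      exact Set.mem_biUnion (Finset.mem_range.2 hklt) ⟨hk.1, hxH⟩
    refine Set.Finite.subset ?_ hsub2
    exact Set.Finite.biUnion (Finset.range (max n i)).finite_toSet
      fun k _ => (hA k).2.2 n (f i) (hflt i)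
  refine ⟨B, horth β hβ B hBsub hBcnt key, ?_⟩
  intro k
  have hsub3 : A k \ B ⊆ ⋃ i ∈ Finset.range (k + 1), (A k ∩ H k (f i)) := by
    intro x hx
    by_contra h
    have : x ∈ A k \ ⋃ i ∈ Finset.range (k + 1), H k (f i) := by
      refine ⟨hx.1, fun hc => ?_⟩
      obtain ⟨i, hi, hxi⟩ := Set.mem_iUnion₂.1 hc
      exact h (Set.mem_biUnion hi ⟨hx.1, hxi⟩)
    exact hx.2 (Set.mem_iUnion.2 ⟨k, this⟩)
  refine Set.Finite.subset ?_ hsub3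
  exact Set.Finite.biUnion (Finset.range (k + 1)).finite_toSet
    fun i _ => (hA k).2.2 k (f i) (hflt i)
end
end
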